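/- Let σ : A → A^+ be an aperiodic substitution with |σ^n(a)| → ∞ as n → ∞ for every a ∈ A. Then ⋂_{n≥0} σ^n(X_σ) = {w(s̄) : s̄ ∈ Λ}. -/

import Mathlib

open Filter Topology

namespace PaperStmt

variable {A : Type*} {B : Type*}

/-- Apply a substitution (letter-to-word map) to a word, by concatenation. -/
def substWord (σ : B → List A) (w : List B) : List A := w.flatMap σ

/-- `σ^n` applied to a word. -/
def substIter (σ : A → List A) (n : ℕ) (w : List A) : List A := (substWord σ)^[n] w

/-- `σ^n(a)` for a letter `a`. -/
def substPow (σ : A → List A) (n : ℕ) (a : A) : List A := substIter σ n [a]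

/-- The language of a substitution: factors of some `σ^n(a)`, `n ≥ 1`. -/
def Lang (σ : A → List A) : Set (List A) :=
  {w | ∃ a : A, ∃ n : ℕ, 1 ≤ n ∧ w <:+: substIter σ n [a]}

/-- The word `x[i], x[i+1], …, x[i+len-1]` read in a bi-infinite sequence. -/
def seg (x : ℤ → A) (i : ℤ) (len : ℕ) : List A :=
  (List.range len).map fun k => x (i + k)

/-- The phase space `X_σ` of the substitutional dynamical system. -/
def Xsub (σ : A → List A) : Set (ℤ → A) :=
  {x | ∀ n : ℕ, seg x (-(n : ℤ)) (2 * n + 1) ∈ Lang σ}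

/-- `L(X_σ)`: all finite words occurring in elements of `X_σ`. -/
def LangX (σ : A → List A) : Set (List A) :=
  {w | ∃ x ∈ Xsub σ, ∃ i : ℤ, seg x i w.length = w}

/-- The left shift `T`. -/
def shift (x : ℤ → A) : ℤ → A := fun k => x (k + 1)

/-- The power `T^i` of the left shift, `i ∈ ℤ`. -/
def shiftZ (i : ℤ) (x : ℤ → A) : ℤ → A := fun k => x (k + i)

/-- `(X_σ, T_σ)` has no periodic points. -/
def Aperiodic (σ : A → List A) : Prop :=
  ∀ x ∈ Xsub σ, ∀ p : ℕ, 0 < p → shiftZ (p : ℤ) x ≠ x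

/-- The coordinate at which the `n`-th block of the bi-infinite concatenation
`⋯ σ(x_{-1}).σ(x_0) σ(x_1) ⋯` starts (block `0` starts at coordinate `0`). -/
def blockStart (σ : B → List A) (x : ℤ → B) (n : ℤ) : ℤ :=
  if 0 ≤ n then ∑ j ∈ Finset.range n.toNat, ((σ (x (j : ℤ))).length : ℤ)
  else -∑ j ∈ Finset.range (-n).toNat, ((σ (x (-(j : ℤ) - 1))).length : ℤ)

/-- `y` is the image of the bi-infinite sequence `x` under the substitution `σ`,
i.e. `y = ⋯ σ(x_{-1}).σ(x_0)σ(x_1)⋯` with `σ(x_0)` starting at coordinate `0`. -/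
def IsSubstImage (σ : B → List A) (x : ℤ → B) (y : ℤ → A) : Prop :=
  ∀ n : ℤ, seg y (blockStart σ x n) (σ (x n)).length = σ (x n)

/-- `A_l`: the letters `a` with `|σ^n(a)| → ∞`. -/
def longLetters (σ : A → List A) : Set A :=
  {a | Tendsto (fun n => (substPow σ n a).length) atTop atTop}

/-- A minimal component of `(X_σ, T_σ)`: a nonempty closed shift-invariant subset of `X_σ`
that is minimal with respect to inclusion. -/
def MinimalComponent [TopologicalSpace A] (σ : A → List A) (Z : Set (ℤ → A)) : Prop :=
  Z.Nonempty ∧ IsClosed Z ∧ Z ⊆ Xsub σ ∧ shift '' Z = Z ∧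
    ∀ Z' : Set (ℤ → A), Z'.Nonempty → IsClosed Z' → Z' ⊆ Z → shift '' Z' = Z' → Z' = Z

/-- The element `T_σ^i σ^n([a])` of the Kakutani–Rokhlin partition `P_n`. -/
def piece (σ : A → List A) (n : ℕ) (a : A) (i : ℕ) : Set (ℤ → A) :=
  {x | ∃ y z : ℤ → A, y ∈ Xsub σ ∧ y 0 = a ∧
    IsSubstImage (substPow σ n) y z ∧ x = shiftZ (i : ℤ) z}

/-- An `m`-primitive substitution, with respect to a decomposition
`A = P 0 ⊔ … ⊔ P (m-1) ⊔ A0`. -/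
def IsMPrimitive (σ : A → List A) (m : ℕ) (P : Fin m → Set A) (A0 : Set A) : Prop :=
  (∀ i j : Fin m, i ≠ j → Disjoint (P i) (P j)) ∧
  (∀ i, Disjoint (P i) A0) ∧
  ((⋃ i, P i) ∪ A0 = Set.univ) ∧
  (∀ i, ∃ a ∈ P i, ∃ b ∈ P i, a ≠ b) ∧
  (∀ i, ∀ a ∈ P i, ∀ b ∈ σ a, b ∈ P i) ∧
  (∀ i, ∀ a ∈ P i, ∀ b ∈ P i, ∃ n : ℕ, 1 ≤ n ∧ b ∈ substPow σ n a) ∧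
  (∀ a : A, ∃ n : ℕ, 0 < n ∧ ∃ i, ∃ b ∈ P i, b ∈ substPow σ n a) ∧
  (∀ k : ℕ, 1 ≤ k → Lang (substPow σ k) = Lang σ) ∧
  (∀ a : A, [a] ∈ LangX σ)

/-- The set `Z_i` attached to the part `A_i = P i` of an `m`-primitive substitution. -/
def Zset (σ : A → List A) {m : ℕ} (P : Fin m → Set A) (i : Fin m) : Set (ℤ → A) :=
  {x | x ∈ Xsub σ ∧ ∀ n : ℕ, ∃ k : ℕ, 1 ≤ k ∧ ∃ a ∈ P i,
    seg x (-(n : ℤ)) (2 * n + 1) <:+: substPow σ k a}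

/-- The clopen set `W = ∪_i [r_i.l_i]` built from fixed points `w i`. -/
def Wset (σ : A → List A) {m : ℕ} (w : Fin m → ℤ → A) : Set (ℤ → A) :=
  ⋃ i : Fin m, {x | x ∈ Xsub σ ∧ x (-1) = w i (-1) ∧ x 0 = w i 0}

/-- A return word, given the letters `r i = w_i[-1]` and `l i = w_i[0]`. -/
def IsReturnWord (σ : A → List A) {m : ℕ} (r l : Fin m → A) (u : List A) : Prop :=
  u ∈ LangX σ ∧ u ≠ [] ∧ ∃ i j : Fin m,
    (r i :: (u ++ [l j])) ∈ LangX σ ∧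
    u.head? = some (l i) ∧ u.getLast? = some (r j) ∧
    ∀ t : Fin m, ¬ ([r t, l t] <:+: u)

/-- A proper substitution. -/
def IsProper (σ : A → List A) : Prop :=
  ∃ p : ℕ, 0 < p ∧ ∀ a : A,
    (∀ b c : A, [a, b] ∈ LangX σ → [a, c] ∈ LangX σ →
      (substPow σ p b).head? = (substPow σ p c).head?) ∧
    (∀ b c : A, [b, a] ∈ LangX σ → [c, a] ∈ LangX σ →
      (substPow σ p b).getLast? = (substPow σ p c).getLast?)

/-- Membership in the set `V` of words `v₁S₁v₂S₂v₃` with `v₁,v₂,v₃ ∈ A_l`, `S₁,S₂ ∈ A_s^*`. -/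
def Vcond (σ : A → List A) : A × List A × A × List A × A → Prop
  | (v1, S1, v2, S2, v3) =>
    v1 ∈ longLetters σ ∧ v2 ∈ longLetters σ ∧ v3 ∈ longLetters σ ∧
    (∀ c ∈ S1, c ∉ longLetters σ) ∧ (∀ c ∈ S2, c ∉ longLetters σ) ∧
    (v1 :: (S1 ++ v2 :: (S2 ++ [v3]))) ∈ LangX σ

/-- The cylinder set `[v₁S₁.v₂S₂v₃]`. -/
def Vbase (σ : A → List A) : A × List A × A × List A × A → Set (ℤ → A)
  | (v1, S1, v2, S2, v3) =>
    {x | x ∈ Xsub σ ∧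
      seg x (-(1 + S1.length : ℤ)) (v1 :: (S1 ++ v2 :: (S2 ++ [v3]))).length
        = v1 :: (S1 ++ v2 :: (S2 ++ [v3]))}

/-- The height `|σ^n(v₂S₂)|` of the tower over `[v₁S₁.v₂S₂v₃]` in `Ξ_n`. -/
def Vheight (σ : A → List A) (n : ℕ) : A × List A × A × List A × A → ℕ
  | (_, _, v2, S2, _) => (substWord (substPow σ n) (v2 :: S2)).length

/-- The element `T_σ^i σ^n([v₁S₁.v₂S₂v₃])` of the Kakutani–Rokhlin partition `Ξ_n`. -/
def Vpiece (σ : A → List A) (n : ℕ) (q : A × List A × A × List A × A) (i : ℕ) :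
    Set (ℤ → A) :=
  {x | ∃ y z : ℤ → A, y ∈ Vbase σ q ∧ IsSubstImage (substPow σ n) y z ∧
    x = shiftZ (i : ℤ) z}

/-- Membership in `Λ`. -/
def MemLambda (σ : A → List A) (s : ℕ → A × A) : Prop :=
  ∀ n : ℕ, [(s n).1, (s n).2] ∈ Lang σ ∧
    (σ (s (n + 1)).1).getLast? = some (s n).1 ∧
    (σ (s (n + 1)).2).head? = some (s n).2

/-- `x = w(s̄)` for `s̄ ∈ Λ`. -/
def IsLambdaPoint (σ : A → List A) (s : ℕ → A × A) (x : ℤ → A) : Prop :=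
  ∀ n : ℕ, seg x (-((substPow σ n (s n).1).length : ℤ))
      ((substPow σ n (s n).1).length + (substPow σ n (s n).2).length)
    = substPow σ n (s n).1 ++ substPow σ n (s n).2

/-- Membership in `M`: `i₀ = 0` and `a_j` occurs at position `i_{j+1}` of `σ(a_{j+1})`. -/
def MemM (σ : A → List A) (t : ℕ → A × ℕ) : Prop :=
  (t 0).2 = 0 ∧ ∀ j : ℕ, (σ (t (j + 1)).1)[(t (j + 1)).2]? = some (t j).1

/-- The cutting points `j_n` attached to an element of `M`. -/
def jSeq (σ : A → List A) (t : ℕ → A × ℕ) : ℕ → ℕ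
  | 0 => 0
  | n + 1 =>
      jSeq σ t n + (substWord (substPow σ n) ((σ (t (n + 1)).1).take (t (n + 1)).2)).length

/-- Membership in `M₀`: `j_n → ∞` and `|σ^n(a_n)| - j_n → ∞`. -/
def MZero (σ : A → List A) (t : ℕ → A × ℕ) : Prop :=
  MemM σ t ∧ ∀ N : ℕ, ∃ n0 : ℕ, ∀ n ≥ n0,
    N ≤ jSeq σ t n ∧ jSeq σ t n + N ≤ (substPow σ n (t n).1).length

/-- `x = w(m̄)` for `m̄ ∈ M₀`. -/
def IsMPoint (σ : A → List A) (t : ℕ → A × ℕ) (x : ℤ → A) : Prop :=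
  ∀ n : ℕ, seg x (-(jSeq σ t n : ℤ)) (substPow σ n (t n).1).length = substPow σ n (t n).1

/-!
If `x = σᴺ(y_N)` for every `N`, push the pair `(y_N(-1), y_N(0))` down `N - n` levels by
`(a, b) ↦ (last letter of σ(a), first letter of σ(b))`: this gives a pair `(a_n, b_n)` of
`L(σ)` around which `x` reads `σⁿ(a_n).σⁿ(b_n)`. Since `A × A` is finite, a diagonal (ultrafilter)
argument turns these finite chains into one infinite chain `s̄ ∈ Λ` with `x = w(s̄)`.
Conversely, if `x = w(s̄)`, the shifted chain `(a_{n+m}, b_{n+m})_m` is again in `Λ`; its point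
`y` lies in `X_σ` and `σⁿ(y) = x`, because the words `σᵐ(a_{n+m})σᵐ(b_{n+m})` exhaust `y` as
`|σᵐ(·)| → ∞` uniformly in the letter.
-/

section Words

variable (τ : B → List A)

@[simp]
theorem substWord_nil : substWord τ [] = [] := rfl

@[simp]
theorem substWord_cons (b : B) (w : List B) : substWord τ (b :: w) = τ b ++ substWord τ w := by
  simp [substWord]

@[simp]
theorem substWord_append (u w : List B) :
    substWord τ (u ++ w) = substWord τ u ++ substWord τ w := by
  simp [substWord]

theorem substWord_singleton (b : B) : substWord τ [b] = τ b := by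
  simp

end Words

section Iterates

variable {σ : A → List A}

theorem substIter_append (σ : A → List A) (n : ℕ) (u w : List A) :
    substIter σ n (u ++ w) = substIter σ n u ++ substIter σ n w := by
  induction n generalizing u w with
  | zero => rfl
  | succ n ih =>
    simp only [substIter, Function.iterate_succ_apply, substWord_append] at ih ⊢
    rw [ih]

theorem substIter_eq_substWord (σ : A → List A) (n : ℕ) (w : List A) :
    substIter σ n w = substWord (substPow σ n) w := by
  induction w with
  | nil => induction n <;> simp_all [substIter, Function.iterate_succ_apply']
  | cons a w ih => rw [← List.singleton_append, substIter_append, ih]; simp [substPow]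

theorem substPow_add (σ : A → List A) (n m : ℕ) (a : A) :
    substPow σ (n + m) a = substWord (substPow σ n) (substPow σ m a) := by
  rw [← substIter_eq_substWord, substPow, substPow, substIter, substIter,
    Function.iterate_add_apply]
  rfl

theorem substPow_one (σ : A → List A) (a : A) : substPow σ 1 a = σ a := by
  simp [substPow, substIter, substWord]

theorem substPow_succ' (σ : A → List A) (m : ℕ) (a : A) :
    substPow σ (m + 1) a = substWord (substPow σ m) (σ a) := by
  rw [substPow_add, substPow_one]

theorem substPow_suffix_succ_of_getLast? {a b : A} (h : (σ b).getLast? = some a) (m : ℕ) :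
    substPow σ m a <:+ substPow σ (m + 1) b := by
  obtain ⟨w, hw⟩ := List.getLast?_eq_some_iff.1 h
  rw [substPow_succ', hw, substWord_append, substWord_singleton]
  exact List.suffix_append _ _

theorem substPow_prefix_succ_of_head? {a b : A} (h : (σ b).head? = some a) (m : ℕ) :
    substPow σ m a <+: substPow σ (m + 1) b := by
  obtain ⟨w, hw⟩ := List.head?_eq_some_iff.1 h
  rw [substPow_succ', hw, substWord_cons]
  exact List.prefix_append _ _

theorem mem_Lang_of_infix {u v : List A} (h : u <:+: v) (hv : v ∈ Lang σ) : u ∈ Lang σ := by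
  obtain ⟨a, n, hn, hv⟩ := hv
  exact ⟨a, n, hn, h.trans hv⟩

theorem substIter_mem_Lang {v : List A} (hv : v ∈ Lang σ) (k : ℕ) : substIter σ k v ∈ Lang σ := by
  obtain ⟨a, n, hn, s, t, hst⟩ := hv
  refine ⟨a, k + n, by omega, substIter σ k s, substIter σ k t, ?_⟩
  rw [← substIter_append, ← substIter_append, hst, substIter, substIter, substIter,
    Function.iterate_add_apply]

theorem append_substPow_mem_Lang {a b : A} (h : [a, b] ∈ Lang σ) (k : ℕ) :
    substPow σ k a ++ substPow σ k b ∈ Lang σ := by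
  simpa [substIter_eq_substWord] using substIter_mem_Lang h k

end Iterates

section Segments

variable {σ : A → List A}

-- The index list in `seg` is `List.range len` coerced to `List ℤ` through the list monad.
theorem seg_eq_map_range (x : ℤ → A) (i : ℤ) (len : ℕ) :
    seg x i len = (List.range len).map fun k : ℕ => x (i + k) := by
  simp only [seg, List.pure_def, List.bind_eq_flatMap, ← List.map_eq_flatMap, List.map_map]
  rfl

@[simp]
theorem seg_length (x : ℤ → A) (i : ℤ) (len : ℕ) : (seg x i len).length = len := by
  simp [seg_eq_map_range]

@[simp]
theorem seg_getElem (x : ℤ → A) (i : ℤ) (len k : ℕ) (hk : k < (seg x i len).length) :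
    (seg x i len)[k] = x (i + k) := by
  simp [seg_eq_map_range]

theorem seg_append (x : ℤ → A) (i : ℤ) (l₁ l₂ : ℕ) :
    seg x i (l₁ + l₂) = seg x i l₁ ++ seg x (i + l₁) l₂ := by
  simp [seg_eq_map_range, List.range_add, add_assoc]

theorem seg_one (x : ℤ → A) (i : ℤ) : seg x i 1 = [x i] := by
  simp [seg_eq_map_range]

theorem seg_add_eq_append_iff {x : ℤ → A} {i : ℤ} {u v : List A} :
    seg x i (u.length + v.length) = u ++ v ↔
      seg x i u.length = u ∧ seg x (i + u.length) v.length = v := by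
  rw [seg_append]
  exact ⟨fun h => List.append_inj h (seg_length ..), fun h => by rw [h.1, h.2]⟩

theorem seg_infix_seg (x : ℤ → A) {i i' : ℤ} {len len' : ℕ} (h₁ : i' ≤ i)
    (h₂ : i + len ≤ i' + len') : seg x i len <:+: seg x i' len' := by
  obtain ⟨p, hp⟩ : ∃ p : ℕ, i = i' + p := ⟨(i - i').toNat, by omega⟩
  obtain ⟨q, hq⟩ : ∃ q : ℕ, len' = p + (len + q) := ⟨(i' + len' - (i + len)).toNat, by omega⟩
  rw [hq, seg_append, seg_append, ← hp]
  exact ⟨seg x i' p, seg x (i + len) q, by simp⟩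

theorem seg_mem_Lang_of_mem_Xsub {x : ℤ → A} (hx : x ∈ Xsub σ) (i : ℤ) (len : ℕ) :
    seg x i len ∈ Lang σ := by
  set n := (max (-i) (i + len)).toNat
  exact mem_Lang_of_infix
    (seg_infix_seg x (i' := -n) (len' := 2 * n + 1) (by omega) (by omega)) (hx n)

end Segments

/-- `x` reads the word `u ++ v` with `v` starting at coordinate `0`. -/
def IsCentered (x : ℤ → A) (u v : List A) : Prop :=
  seg x (-(u.length : ℤ)) (u.length + v.length) = u ++ v

section Centered

variable {x : ℤ → A} {u v : List A}

theorem isCentered_iff :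
    IsCentered x u v ↔ seg x (-(u.length : ℤ)) u.length = u ∧ seg x 0 v.length = v := by
  rw [IsCentered, seg_add_eq_append_iff, neg_add_cancel]

theorem IsCentered.mono {u' v' : List A} (h : IsCentered x u v) (hu : u' <:+ u) (hv : v' <+: v) :
    IsCentered x u' v' := by
  obtain ⟨hxu, hxv⟩ := isCentered_iff.1 h
  obtain ⟨u₀, rfl⟩ := hu
  obtain ⟨v₁, rfl⟩ := hv
  rw [List.length_append, seg_add_eq_append_iff] at hxu hxv
  refine isCentered_iff.2 ⟨?_, hxv.1⟩
  simpa [List.length_append] using hxu.2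

theorem IsCentered.seg_infix (h : IsCentered x u v) {N : ℕ} (hu : N ≤ u.length)
    (hv : N + 1 ≤ v.length) : seg x (-(N : ℤ)) (2 * N + 1) <:+: u ++ v := by
  rw [← h]
  exact seg_infix_seg x (by omega) (by omega)

end Centered

section BlockStart

variable (τ : B → List A) (y : ℤ → B)

@[simp]
theorem blockStart_zero : blockStart τ y 0 = 0 := by
  simp [blockStart]

theorem blockStart_natCast (n : ℕ) :
    blockStart τ y n = ∑ j ∈ Finset.range n, ((τ (y j)).length : ℤ) := by
  simp [blockStart]

theorem blockStart_neg_natCast (n : ℕ) :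
    blockStart τ y (-n) = -∑ j ∈ Finset.range n, ((τ (y (-j - 1))).length : ℤ) := by
  rcases n with _ | n
  · simp [blockStart]
  · rw [blockStart, if_neg (by omega)]
    simp

theorem blockStart_succ (k : ℤ) :
    blockStart τ y (k + 1) = blockStart τ y k + (τ (y k)).length := by
  rcases Int.eq_nat_or_neg k with ⟨n, rfl | rfl⟩
  · rw [← Nat.cast_succ, blockStart_natCast, blockStart_natCast, Finset.sum_range_succ]
  · rcases n with _ | m
    · simp [blockStart]
    · rw [show -((m + 1 : ℕ) : ℤ) + 1 = -(m : ℤ) by push_cast; ring, blockStart_neg_natCast,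
        blockStart_neg_natCast, Finset.sum_range_succ]
      push_cast
      ring_nf

theorem blockStart_neg_one : blockStart τ y (-1) = -((τ (y (-1))).length : ℤ) := by
  have := blockStart_succ τ y (-1)
  rw [neg_add_cancel, blockStart_zero] at this
  omega

theorem blockStart_add (i : ℤ) (j : ℕ) :
    blockStart τ y (i + j) = blockStart τ y i + (substWord τ (seg y i j)).length := by
  induction j with
  | zero => simp [seg]
  | succ j ih =>
    rw [Nat.cast_succ, ← add_assoc, blockStart_succ, ih, seg_append, seg_one, substWord_append,
      substWord_singleton, List.length_append]
    push_cast
    ring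

end BlockStart

section SubstImage

variable (τ : B → List A) {x : ℤ → A} {y : ℤ → B}

theorem seg_blockStart_of_seg {i : ℤ} {l j : ℕ}
    (hx : seg x (blockStart τ y i) (substWord τ (seg y i l)).length = substWord τ (seg y i l))
    (hj : j < l) :
    seg x (blockStart τ y (i + j)) (τ (y (i + j))).length = τ (y (i + j)) := by
  obtain ⟨r, rfl⟩ : ∃ r, l = j + 1 + r := ⟨l - j - 1, by omega⟩
  rw [seg_append, seg_append, seg_one, substWord_append, substWord_append, substWord_singleton,
    List.append_assoc, List.length_append, seg_add_eq_append_iff, List.length_append,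
    seg_add_eq_append_iff, ← blockStart_add] at hx
  exact hx.2.1

theorem IsCentered.seg_blockStart {u v : List B} (hy : IsCentered y u v)
    (hx : IsCentered x (substWord τ u) (substWord τ v)) {k : ℤ} (hk₁ : -(u.length : ℤ) ≤ k)
    (hk₂ : k < v.length) : seg x (blockStart τ y k) (τ (y k)).length = τ (y k) := by
  have hstart : blockStart τ y (-u.length) = -(substWord τ u).length := by
    have := blockStart_add τ y (-(u.length : ℤ)) u.length
    rw [neg_add_cancel, blockStart_zero, (isCentered_iff.1 hy).1] at this
    omega
  obtain ⟨j, rfl⟩ : ∃ j : ℕ, k = -(u.length : ℤ) + j := ⟨(k + u.length).toNat, by omega⟩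
  refine seg_blockStart_of_seg τ (l := u.length + v.length) ?_ (by omega)
  rw [hy, hstart, substWord_append, List.length_append]
  exact hx

theorem isSubstImage_of_isCentered
    (h : ∀ k : ℤ, ∃ u v : List B, -(u.length : ℤ) ≤ k ∧ k < v.length ∧
      IsCentered y u v ∧ IsCentered x (substWord τ u) (substWord τ v)) :
    IsSubstImage τ y x := fun k => by
  obtain ⟨u, v, hk₁, hk₂, hy, hx⟩ := h k
  exact hy.seg_blockStart τ hx hk₁ hk₂

theorem IsSubstImage.isCentered (h : IsSubstImage τ y x) :
    IsCentered x (τ (y (-1))) (τ (y 0)) := by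
  refine isCentered_iff.2 ⟨?_, ?_⟩
  · simpa [blockStart_neg_one] using h (-1)
  · simpa using h 0

end SubstImage

theorem exists_getElem_eq_of_prefix_chain {L : ℕ → List A} (hL : ∀ m, L m <+: L (m + 1))
    (hlen : ∀ k, ∃ m, k < (L m).length) :
    ∃ f : ℕ → A, ∀ m k (hk : k < (L m).length), (L m)[k] = f k := by
  choose M hM using hlen
  refine ⟨fun k => (L (M k))[k]'(hM k), fun m k hk => ?_⟩
  have hmono := Nat.rel_of_forall_rel_succ_of_le (· <+: ·) hL
  exact ((hmono (le_max_left m (M k))).getElem hk).trans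
    ((hmono (le_max_right m (M k))).getElem (hM k)).symm

theorem exists_isCentered_of_chain {u v : ℕ → List A} (hu : ∀ m, u m <:+ u (m + 1))
    (hv : ∀ m, v m <+: v (m + 1)) (hu' : ∀ k, ∃ m, k < (u m).length)
    (hv' : ∀ k, ∃ m, k < (v m).length) :
    ∃ y : ℤ → A, ∀ m, IsCentered y (u m) (v m) := by
  obtain ⟨f, hf⟩ := exists_getElem_eq_of_prefix_chain hv hv'
  obtain ⟨g, hg⟩ := exists_getElem_eq_of_prefix_chain (L := fun m => (u m).reverse)
    (fun m => List.reverse_prefix.2 (hu m)) (by simpa using hu')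
  refine ⟨fun | (k : ℕ) => f k | Int.negSucc k => g k, fun m => isCentered_iff.2 ⟨?_, ?_⟩⟩
  · refine List.ext_getElem (seg_length ..) fun j hj _ => ?_
    rw [seg_length] at hj
    have hidx : -((u m).length : ℤ) + j = Int.negSucc ((u m).length - 1 - j) := by
      rw [Int.negSucc_eq]; omega
    rw [seg_getElem, hidx]
    change g _ = _
    rw [← hg m _ (by simp; omega), List.getElem_reverse]
    congr 1
    omega
  · refine List.ext_getElem (seg_length ..) fun j hj _ => ?_
    rw [seg_getElem, zero_add]
    exact (hf m j _).symm

section Lambda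

variable {σ : A → List A} {s : ℕ → A × A} {x : ℤ → A}

theorem eventually_le_length_substPow [Finite A]
    (hlen : ∀ a, Tendsto (fun n => (substPow σ n a).length) atTop atTop) (K : ℕ) :
    ∀ᶠ m in atTop, ∀ a, K ≤ (substPow σ m a).length :=
  eventually_all.2 fun a => (hlen a).eventually_ge_atTop K

theorem MemLambda.comp_add_left (hs : MemLambda σ s) (n : ℕ) :
    MemLambda σ fun m => s (n + m) :=
  fun m => hs (n + m)

theorem MemLambda.exists_isLambdaPoint [Finite A]
    (hlen : ∀ a, Tendsto (fun n => (substPow σ n a).length) atTop atTop) (hs : MemLambda σ s) :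
    ∃ y, IsLambdaPoint σ s y := by
  have hgrow : ∀ k, ∃ m, ∀ a, k < (substPow σ m a).length := fun k =>
    (eventually_le_length_substPow hlen (k + 1)).exists
  exact exists_isCentered_of_chain (fun m => substPow_suffix_succ_of_getLast? (hs m).2.1 m)
    (fun m => substPow_prefix_succ_of_head? (hs m).2.2 m)
    (fun k => (hgrow k).imp fun m hm => hm _) (fun k => (hgrow k).imp fun m hm => hm _)

theorem IsLambdaPoint.mem_Xsub [Finite A]
    (hlen : ∀ a, Tendsto (fun n => (substPow σ n a).length) atTop atTop) (hs : MemLambda σ s)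
    (hx : IsLambdaPoint σ s x) : x ∈ Xsub σ := fun N => by
  obtain ⟨m, hm⟩ := (eventually_le_length_substPow hlen (N + 1)).exists
  exact mem_Lang_of_infix (IsCentered.seg_infix (hx m) (Nat.le_of_succ_le (hm _)) (hm _))
    (append_substPow_mem_Lang (hs m).1 m)

theorem isSubstImage_of_isLambdaPoint [Finite A]
    (hlen : ∀ a, Tendsto (fun n => (substPow σ n a).length) atTop atTop) {n : ℕ} {y : ℤ → A}
    (hy : IsLambdaPoint σ (fun m => s (n + m)) y) (hx : IsLambdaPoint σ s x) :
    IsSubstImage (substPow σ n) y x := by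
  refine isSubstImage_of_isCentered _ fun k => ?_
  obtain ⟨m, hm⟩ := (eventually_le_length_substPow hlen (k.natAbs + 1)).exists
  have hu := hm (s (n + m)).1
  have hv := hm (s (n + m)).2
  refine ⟨substPow σ m (s (n + m)).1, substPow σ m (s (n + m)).2, by omega, by omega, hy m, ?_⟩
  rw [← substPow_add, ← substPow_add]
  exact hx (n + m)

end Lambda

/-- The pair `(a_n, b_n)` determined by `(a_{n+1}, b_{n+1})` in a chain of `Λ`. -/
def pairDown (σ : A → List A) (p : A × A) : A × A :=
  ((σ p.1).getLastD p.1, (σ p.2).headD p.2)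

def IsLevelPair (σ : A → List A) (x : ℤ → A) (n : ℕ) (p : A × A) : Prop :=
  [p.1, p.2] ∈ Lang σ ∧ IsCentered x (substPow σ n p.1) (substPow σ n p.2)

section LevelPair

variable {σ : A → List A} {x : ℤ → A}

theorem getLast?_eq_pairDown_fst (hne : ∀ a, σ a ≠ []) (p : A × A) :
    (σ p.1).getLast? = some (pairDown σ p).1 := by
  rw [pairDown, List.getLastD_eq_getLast?, List.getLast?_eq_some_getLast (hne _)]
  rfl

theorem head?_eq_pairDown_snd (hne : ∀ a, σ a ≠ []) (p : A × A) :
    (σ p.2).head? = some (pairDown σ p).2 := by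
  rw [pairDown, List.headD_eq_head?, List.head?_eq_some_head (hne _)]
  rfl

theorem IsLevelPair.pairDown_of_succ (hne : ∀ a, σ a ≠ []) {n : ℕ} {p : A × A}
    (h : IsLevelPair σ x (n + 1) p) : IsLevelPair σ x n (pairDown σ p) := by
  refine ⟨mem_Lang_of_infix ?_ (append_substPow_mem_Lang h.1 1),
    h.2.mono (substPow_suffix_succ_of_getLast? (getLast?_eq_pairDown_fst hne p) n)
      (substPow_prefix_succ_of_head? (head?_eq_pairDown_snd hne p) n)⟩
  obtain ⟨u, hu⟩ := List.getLast?_eq_some_iff.1 (getLast?_eq_pairDown_fst hne p)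
  obtain ⟨v, hv⟩ := List.head?_eq_some_iff.1 (head?_eq_pairDown_snd hne p)
  exact ⟨u, v, by simp [substPow_one, hu, hv]⟩

theorem IsLevelPair.iterate_pairDown (hne : ∀ a, σ a ≠ []) {n d : ℕ} {p : A × A}
    (h : IsLevelPair σ x (n + d) p) : IsLevelPair σ x n ((pairDown σ)^[d] p) := by
  induction d generalizing p with
  | zero => exact h
  | succ d ih =>
    rw [Function.iterate_succ_apply]
    exact ih (h.pairDown_of_succ hne)

theorem IsSubstImage.isLevelPair {y : ℤ → A} {N : ℕ} (hy : y ∈ Xsub σ)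
    (h : IsSubstImage (substPow σ N) y x) : IsLevelPair σ x N (y (-1), y 0) := by
  refine ⟨?_, h.isCentered⟩
  simpa [seg_eq_map_range, List.range_succ] using seg_mem_Lang_of_mem_Xsub hy (-1) 2

end LevelPair

theorem exists_forall_frequently_eq {α : Type*} [Finite α] (c : ℕ → ℕ → α) :
    ∃ s : ℕ → α, ∀ n, ∃ᶠ N in atTop, ∀ i ≤ n, c N i = s i := by
  set U := Ultrafilter.of (atTop : Filter ℕ)
  have hlim : ∀ i, ∃ a, ∀ᶠ N in (U : Filter ℕ), c N i = a := fun i => by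
    obtain ⟨a, ha⟩ := (U.map (c · i)).eq_pure_of_finite
    have h : {a} ∈ (U.map (c · i) : Filter α) := by
      rw [ha, Ultrafilter.coe_pure]
      exact mem_pure.2 rfl
    rw [Ultrafilter.coe_map, mem_map] at h
    exact ⟨a, h⟩
  choose s hs using hlim
  refine ⟨s, fun n => Frequently.filter_mono ?_ (Ultrafilter.of_le _)⟩
  exact ((eventually_all_finite (Set.finite_Iic n)).2 fun i _ => hs i).frequently

theorem exists_memLambda_of_forall_isSubstImage [Finite A] {σ : A → List A}
    (hne : ∀ a, σ a ≠ []) {x : ℤ → A}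
    (hx : ∀ N : ℕ, ∃ y ∈ Xsub σ, IsSubstImage (substPow σ N) y x) :
    ∃ s : ℕ → A × A, MemLambda σ s ∧ IsLambdaPoint σ s x := by
  choose y hyX hyI using hx
  set c : ℕ → ℕ → A × A := fun N n => (pairDown σ)^[N - n] (y N (-1), y N 0)
  have hlevel : ∀ n N, n ≤ N → IsLevelPair σ x n (c N n) := fun n N hnN =>
    IsLevelPair.iterate_pairDown hne
      (by rw [Nat.add_sub_cancel' hnN]; exact (hyI N).isLevelPair (hyX N))
  have hdown : ∀ n N, n < N → c N n = pairDown σ (c N (n + 1)) := fun n N hnN => by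
    simp only [c, ← Function.iterate_succ_apply' (pairDown σ)]
    congr 2
    omega
  obtain ⟨s, hs⟩ := exists_forall_frequently_eq c
  have hagree : ∀ n, ∃ N, n < N ∧ c N n = s n ∧ c N (n + 1) = s (n + 1) := fun n => by
    obtain ⟨N, hcs, hN⟩ := ((hs (n + 1)).and_eventually (eventually_gt_atTop n)).exists
    exact ⟨N, hN, hcs n n.le_succ, hcs (n + 1) le_rfl⟩
  refine ⟨s, fun n => ?_, fun n => ?_⟩
  · obtain ⟨N, hnN, hn, hn1⟩ := hagree n
    have hpair : s n = pairDown σ (s (n + 1)) := by rw [← hn, ← hn1, hdown n N hnN]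
    refine ⟨hn ▸ (hlevel n N hnN.le).1, ?_, ?_⟩
    · rw [hpair]; exact getLast?_eq_pairDown_fst hne _
    · rw [hpair]; exact head?_eq_pairDown_snd hne _
  · obtain ⟨N, hnN, hn, -⟩ := hagree n
    exact hn ▸ (hlevel n N hnN.le).2

theorem intersection_of_images_general
    {A : Type*} [Fintype A] (σ : A → List A) (hne : ∀ a, σ a ≠ [])
    (hlen : ∀ a : A, Filter.Tendsto (fun n => (substPow σ n a).length)
      Filter.atTop Filter.atTop) :
    (⋂ n : ℕ, {z : ℤ → A | ∃ y ∈ Xsub σ, IsSubstImage (substPow σ n) y z}) =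
      {x : ℤ → A | ∃ s : ℕ → A × A, MemLambda σ s ∧ IsLambdaPoint σ s x} := by
  ext x
  simp only [Set.mem_iInter, Set.mem_ofPred_eq]
  constructor
  · exact exists_memLambda_of_forall_isSubstImage hne
  · rintro ⟨s, hs, hx⟩ n
    obtain ⟨y, hy⟩ := (hs.comp_add_left n).exists_isLambdaPoint hlen
    exact ⟨y, hy.mem_Xsub hlen (hs.comp_add_left n), isSubstImage_of_isLambdaPoint hlen hy hx⟩

/-- For an aperiodic substitution with `|σ^n(a)| → ∞` for every
letter `a`, `⋂_{n≥0} σ^n(X_σ) = {w(s̄) : s̄ ∈ Λ}`. -/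
theorem intersection_of_images
    {A : Type*} [Fintype A] (σ : A → List A) (hne : ∀ a, σ a ≠ [])
    (hunc : ¬ (Xsub σ).Countable) (hap : Aperiodic σ)
    (hlen : ∀ a : A, Filter.Tendsto (fun n => (substPow σ n a).length)
      Filter.atTop Filter.atTop) :
    (⋂ n : ℕ, {z : ℤ → A | ∃ y ∈ Xsub σ, IsSubstImage (substPow σ n) y z}) =
      {x : ℤ → A | ∃ s : ℕ → A × A, MemLambda σ s ∧ IsLambdaPoint σ s x} :=
  intersection_of_images_general σ hne hlen

end PaperStmt
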